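/- arXiv:1901.10845 — 3 statements merged into one kernel-verified Lean document; each statement's English description precedes it below -/
import Mathlib

section
/- Let N ≥ 2 and 0 < s < 1. For every φ ∈ L²(ℝ^N) with finite Gagliardo seminorm [φ]_{W^{s,2}} < ∞ and every z > 0, one has ‖P_z ∗ φ − φ‖²_{L²(ℝ^N)} ≤ β_{N,s} [φ]²_{W^{s,2}} z^{2s}. -/
open MeasureTheory Filter
open scoped ENNReal NNReal Topology FourierTransform RealInnerProductSpace

noncomputable section

/-- Euclidean space ℝ^N -/
abbrev Eu (N : ℕ) := EuclideanSpace ℝ (Fin N)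

/-- Squared Gagliardo seminorm `[u]_{W^{s,2}}²`, as an extended nonnegative real. -/
def gagliardoSq (N : ℕ) (s : ℝ) (u : Eu N → ℝ) : ℝ≥0∞ :=
  ∫⁻ x, ∫⁻ y, ENNReal.ofReal (|u x - u y| ^ 2 / ‖x - y‖ ^ ((N : ℝ) + 2 * s))

/-- Squared Gagliardo seminorm, as a real number. -/
def gagliardoSqR (N : ℕ) (s : ℝ) (u : Eu N → ℝ) : ℝ :=
  (gagliardoSq N s u).toReal

/-- The sharp fractional Poincaré–Sobolev constant
`λ_{s,q}(Ω) = inf { [u]_{W^{s,2}}² : u ∈ C_c^∞(Ω), ‖u‖_{L^q(Ω)} = 1 }`. -/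
def sobolevConst (N : ℕ) (s q : ℝ) (Ω : Set (Eu N)) : ℝ :=
  sInf { c : ℝ | ∃ u : Eu N → ℝ, ContDiff ℝ (⊤ : ℕ∞) u ∧ HasCompactSupport u ∧
    tsupport u ⊆ Ω ∧ (∫ x in Ω, |u x| ^ q) = 1 ∧ c = gagliardoSqR N s u }

/-- The Fraenkel asymmetry `A(Ω)`. -/
def asym (N : ℕ) (Ω : Set (Eu N)) : ℝ :=
  sInf { c : ℝ | ∃ (x₀ : Eu N) (r : ℝ), 0 < r ∧
    volume (Metric.ball x₀ r) = volume Ω ∧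
    c = (volume (symmDiff Ω (Metric.ball x₀ r))).toReal / (volume Ω).toReal }

/-- The normalizing constant `β_{N,s}`. -/
def betaC (N : ℕ) (s : ℝ) : ℝ :=
  (∫ x : Eu N, ((1 : ℝ) + ‖x‖ ^ 2) ^ (-((N : ℝ) + 2 * s) / 2))⁻¹

/-- The Poisson kernel `P_z(x) = β_{N,s} z^{2s} (z² + |x|²)^{-(N+2s)/2}`. -/
def poisson (N : ℕ) (s z : ℝ) (x : Eu N) : ℝ :=
  betaC N s * z ^ (2 * s) * ((z ^ 2 + ‖x‖ ^ 2) ^ (-((N : ℝ) + 2 * s) / 2))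

/-- The Caffarelli–Silvestre extension `U(x,z) = (P_z ∗ u)(x)`. -/
def csExt (N : ℕ) (s : ℝ) (u : Eu N → ℝ) (x : Eu N) (z : ℝ) : ℝ :=
  ∫ y, poisson N s z (x - y) * u y

/-- A first minimizer for `λ_{s,q}(Ω)`: a nonnegative measurable function, vanishing a.e.
outside `Ω`, with unit `L^q` norm, realizing the infimum, and positive inside `Ω`. -/
def IsFirstMinimizer (N : ℕ) (s q : ℝ) (Ω : Set (Eu N)) (u : Eu N → ℝ) : Prop :=
  Measurable u ∧ (∀ x, 0 ≤ u x) ∧ (∀ᵐ x, x ∉ Ω → u x = 0) ∧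
  (∫ x in Ω, u x ^ q) = 1 ∧ gagliardoSqR N s u = sobolevConst N s q Ω ∧
  ∀ x ∈ Ω, 0 < u x

/-- The level `T` from (4.1): `T = sup { t > 0 : |{u > t}| ≥ |Ω| (1 - A(Ω)/9) }`. -/
def levelT (N : ℕ) (Ω : Set (Eu N)) (u : Eu N → ℝ) : ℝ :=
  sSup { t : ℝ | 0 < t ∧
    volume Ω * ENNReal.ofReal (1 - asym N Ω / 9) ≤ volume {x | t < u x} }


section AuxPoisson
open Module
variable {N : ℕ} {s z : ℝ}

lemma hNr (hs0 : 0 < s) : ((finrank ℝ (Eu N) : ℝ)) < (N : ℝ) + 2 * s := by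
  rw [finrank_euclideanSpace_fin]; linarith

lemma baseInt (hs0 : 0 < s) :
    Integrable (fun x : Eu N => ((1:ℝ) + ‖x‖ ^ 2) ^ (-((N:ℝ) + 2 * s) / 2)) :=
  integrable_rpow_neg_one_add_norm_sq (hNr hs0)

lemma basePos (hs0 : 0 < s) :
    0 < ∫ x : Eu N, ((1:ℝ) + ‖x‖ ^ 2) ^ (-((N:ℝ) + 2 * s) / 2) := by
  rw [integral_pos_iff_support_of_nonneg_ae
    (Eventually.of_forall fun x => Real.rpow_nonneg (by positivity) _) (baseInt hs0)]
  have : Function.support (fun x : Eu N => ((1:ℝ) + ‖x‖ ^ 2) ^ (-((N:ℝ) + 2 * s) / 2))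
      = Set.univ := by
    ext x; simp only [Function.mem_support, Set.mem_univ, iff_true]
    positivity
  rw [this]
  exact Measure.measure_univ_pos.mpr (NeZero.ne _)

lemma betaC_pos (hs0 : 0 < s) : 0 < betaC N s := inv_pos.2 (basePos hs0)

lemma poisson_nonneg (hs0 : 0 < s) (hz : 0 < z) (x : Eu N) : 0 ≤ poisson N s z x := by
  have := betaC_pos (N := N) hs0
  unfold poisson
  positivity

lemma scaled_integrable (hs0 : 0 < s) (hz : 0 < z) :
    Integrable (fun x : Eu N => (z ^ 2 + ‖x‖ ^ 2) ^ (-((N:ℝ) + 2 * s) / 2)) := by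
  rw [← integrable_comp_smul_iff volume
    (fun x : Eu N => (z ^ 2 + ‖x‖ ^ 2) ^ (-((N:ℝ) + 2 * s) / 2)) hz.ne']
  have : (fun x : Eu N => (z ^ 2 + ‖z • x‖ ^ 2) ^ (-((N:ℝ) + 2 * s) / 2))
      = fun x : Eu N => (z ^ 2) ^ (-((N:ℝ) + 2 * s) / 2) *
        ((1:ℝ) + ‖x‖ ^ 2) ^ (-((N:ℝ) + 2 * s) / 2) := by
    funext x
    rw [norm_smul, Real.norm_eq_abs, abs_of_pos hz, mul_pow, ← mul_one_add,
      Real.mul_rpow (by positivity) (by positivity)]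
  rw [this]
  exact (baseInt hs0).const_mul _

lemma scaled_integral (hs0 : 0 < s) (hz : 0 < z) :
    ∫ x : Eu N, (z ^ 2 + ‖x‖ ^ 2) ^ (-((N:ℝ) + 2 * s) / 2)
      = z ^ (-(2 * s)) * ∫ x : Eu N, ((1:ℝ) + ‖x‖ ^ 2) ^ (-((N:ℝ) + 2 * s) / 2) := by
  have h := Measure.integral_comp_smul_of_nonneg volume
    (fun x : Eu N => (z ^ 2 + ‖x‖ ^ 2) ^ (-((N:ℝ) + 2 * s) / 2)) z (hR := hz.le)
  have hl : (fun x : Eu N => (z ^ 2 + ‖z • x‖ ^ 2) ^ (-((N:ℝ) + 2 * s) / 2))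
      = fun x : Eu N => z ^ (-((N:ℝ) + 2 * s)) *
        ((1:ℝ) + ‖x‖ ^ 2) ^ (-((N:ℝ) + 2 * s) / 2) := by
    funext x
    rw [norm_smul, Real.norm_eq_abs, abs_of_pos hz, mul_pow, ← mul_one_add,
      Real.mul_rpow (by positivity) (by positivity)]
    congr 1
    rw [← Real.rpow_natCast z 2, ← Real.rpow_mul hz.le]
    congr 1
    ring
  rw [hl] at h
  rw [integral_const_mul] at h
  rw [finrank_euclideanSpace_fin, smul_eq_mul] at h
  -- h : z ^ (-(N+2s)) * ∫ base = (z^N)⁻¹ * ∫ target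
  have hzN : (z ^ N : ℝ) ≠ 0 := by positivity
  have key : (z ^ (N:ℝ)) * z ^ (-((N:ℝ) + 2*s)) = z ^ (-(2 * s)) := by
    rw [← Real.rpow_add hz]; ring_nf
  have hT : (∫ x : Eu N, (z ^ 2 + ‖x‖ ^ 2) ^ (-((N:ℝ) + 2 * s) / 2))
      = z ^ N * (z ^ (-((N:ℝ) + 2*s)) * ∫ x : Eu N, ((1:ℝ) + ‖x‖ ^ 2) ^ (-((N:ℝ) + 2 * s) / 2)) := by
    rw [h]; field_simp
  rw [hT, ← mul_assoc, ← Real.rpow_natCast z N, key]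

lemma poisson_integrable (hs0 : 0 < s) (hz : 0 < z) : Integrable (poisson N s z) := by
  unfold poisson
  exact (scaled_integrable (N := N) hs0 hz).const_mul _

lemma poisson_integral (hs0 : 0 < s) (hz : 0 < z) : ∫ x : Eu N, poisson N s z x = 1 := by
  unfold poisson
  rw [integral_const_mul, scaled_integral hs0 hz, Real.rpow_neg hz.le]
  have hI := (basePos (N := N) hs0).ne'
  have hzp := (Real.rpow_pos_of_pos hz (2 * s)).ne'
  have habs : ∀ I c : ℝ, I ≠ 0 → c ≠ 0 → I⁻¹ * c * (c⁻¹ * I) = 1 := by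
    intros I c hI hc; field_simp
  unfold betaC
  exact habs _ _ hI hzp

lemma poisson_continuous (hz : 0 < z) : Continuous (poisson N s z) := by
  unfold poisson
  apply Continuous.mul continuous_const
  apply Continuous.rpow_const (by continuity)
  intro x
  left
  positivity

lemma poisson_le (hs0 : 0 < s) (hz : 0 < z) {x : Eu N} (hx : x ≠ 0) :
    poisson N s z x ≤ betaC N s * z ^ (2 * s) * (‖x‖ ^ ((N:ℝ) + 2 * s))⁻¹ := by
  have hb := betaC_pos (N := N) hs0
  have hnx : (0:ℝ) < ‖x‖ := norm_pos_iff.2 hx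
  have h1 : ((z ^ 2 + ‖x‖ ^ 2 : ℝ)) ^ (-((N:ℝ) + 2 * s) / 2)
      ≤ ((‖x‖ ^ 2 : ℝ)) ^ (-((N:ℝ) + 2 * s) / 2) := by
    apply Real.rpow_le_rpow_of_nonpos (by positivity) (by nlinarith [sq_nonneg z])
    have : (0:ℝ) < (N:ℝ) + 2 * s := by positivity
    linarith
  have h2 : ((‖x‖ ^ 2 : ℝ)) ^ (-((N:ℝ) + 2 * s) / 2) = (‖x‖ ^ ((N:ℝ) + 2 * s))⁻¹ := by
    rw [← Real.rpow_natCast ‖x‖ 2, ← Real.rpow_mul (norm_nonneg x), ← Real.rpow_neg (norm_nonneg x)]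
    congr 1
    push_cast
    ring
  unfold poisson
  rw [← h2]
  have : (0:ℝ) ≤ betaC N s * z ^ (2 * s) := by positivity
  exact mul_le_mul_of_nonneg_left h1 this

lemma stepA (hs0 : 0 < s) (hz : 0 < z) (φ : Eu N → ℝ)
    (hφm : AEMeasurable φ (volume : Measure (Eu N))) (x : Eu N) :
    ENNReal.ofReal ((csExt N s φ x z - φ x) ^ 2)
      ≤ ∫⁻ y, ENNReal.ofReal (poisson N s z (x - y)) * ENNReal.ofReal ((φ y - φ x) ^ 2) := by
  set P' : Eu N → ℝ := fun y => poisson N s z (x - y) with hP'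
  have hP'int : Integrable P' := (poisson_integrable hs0 hz).comp_sub_left x
  have hP'nn : ∀ y, 0 ≤ P' y := fun y => poisson_nonneg hs0 hz _
  have hP'meas : Measurable P' :=
    (poisson_continuous hz).measurable.comp (measurable_const.sub measurable_id)
  have hmass : ∫⁻ y, ENNReal.ofReal (P' y) = 1 := by
    rw [← ofReal_integral_eq_lintegral_ofReal hP'int (Eventually.of_forall hP'nn), hP']
    rw [integral_sub_left_eq_self (poisson N s z) volume x, poisson_integral hs0 hz,
      ENNReal.ofReal_one]
  set G := ∫⁻ y, ENNReal.ofReal (P' y) * ENNReal.ofReal ((φ y - φ x) ^ 2) with hG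
  by_cases hGtop : G = ⊤
  · exact hGtop ▸ le_top
  -- Cauchy-Schwarz
  have hpq : Real.HolderConjugate 2 2 := Real.holderConjugate_iff.mpr ⟨one_lt_two, by norm_num⟩
  have hfm : AEMeasurable (fun y => (ENNReal.ofReal (P' y)) ^ (1/2 : ℝ)) (volume : Measure (Eu N)) :=
    ((ENNReal.measurable_ofReal.comp hP'meas).pow_const _).aemeasurable
  have hgm : AEMeasurable (fun y => (ENNReal.ofReal (P' y)) ^ (1/2 : ℝ)
      * ENNReal.ofReal |φ y - φ x|) (volume : Measure (Eu N)) := by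
    apply hfm.mul
    exact (ENNReal.measurable_ofReal.comp measurable_abs).comp_aemeasurable
      (hφm.sub aemeasurable_const)
  have hCS := ENNReal.lintegral_mul_le_Lp_mul_Lq volume hpq hfm hgm
  have hL : ∀ y : Eu N, ((fun y => (ENNReal.ofReal (P' y)) ^ (1/2 : ℝ)) *
      (fun y => (ENNReal.ofReal (P' y)) ^ (1/2 : ℝ) * ENNReal.ofReal |φ y - φ x|)) y
      = ENNReal.ofReal (P' y) * ENNReal.ofReal |φ y - φ x| := by
    intro y
    show (ENNReal.ofReal (P' y)) ^ (1/2 : ℝ) * ((ENNReal.ofReal (P' y)) ^ (1/2 : ℝ) * _) = _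
    rw [← mul_assoc, ← ENNReal.rpow_add_of_nonneg _ _ (by norm_num) (by norm_num)]
    norm_num
  have hf2 : ∀ y : Eu N, ((ENNReal.ofReal (P' y)) ^ (1/2 : ℝ)) ^ (2:ℝ) = ENNReal.ofReal (P' y) := by
    intro y
    rw [← ENNReal.rpow_mul]
    norm_num
  have hg2 : ∀ y : Eu N, ((ENNReal.ofReal (P' y)) ^ (1/2 : ℝ) * ENNReal.ofReal |φ y - φ x|) ^ (2:ℝ)
      = ENNReal.ofReal (P' y) * ENNReal.ofReal ((φ y - φ x) ^ 2) := by
    intro y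
    rw [ENNReal.mul_rpow_of_nonneg _ _ (by norm_num), hf2 y,
      ENNReal.ofReal_rpow_of_nonneg (abs_nonneg _) (by norm_num)]
    congr 1
    rw [Real.rpow_two, sq_abs]
  rw [lintegral_congr hL] at hCS
  simp_rw [lintegral_congr hf2, lintegral_congr hg2] at hCS
  rw [hmass, ← hG, ENNReal.one_rpow, one_mul] at hCS
  -- hCS : ∫⁻ ofReal P' * ofReal |Δ| ≤ G ^ (1/2)
  have hGhalf_ne_top : G ^ (1/2 : ℝ) ≠ ⊤ := by
    simp [ENNReal.rpow_eq_top_iff, hGtop]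
  have hIab : Integrable (fun y => P' y * (φ y - φ x)) := by
    constructor
    · exact (hP'meas.aemeasurable.mul (hφm.sub aemeasurable_const)).aestronglyMeasurable
    · show (∫⁻ y, (‖P' y * (φ y - φ x)‖₊ : ℝ≥0∞) ∂volume) < ⊤
      have : ∀ y : Eu N, (‖P' y * (φ y - φ x)‖₊ : ℝ≥0∞)
          = ENNReal.ofReal (P' y) * ENNReal.ofReal |φ y - φ x| := by
        intro y
        rw [← enorm_eq_nnnorm, Real.enorm_eq_ofReal_abs, abs_mul, abs_of_nonneg (hP'nn y),
          ENNReal.ofReal_mul (hP'nn y)]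
      rw [lintegral_congr this]
      exact lt_of_le_of_lt hCS hGhalf_ne_top.lt_top
  have hIb : Integrable (fun y => P' y * φ x) := hP'int.mul_const _
  have hIfull : Integrable (fun y => P' y * φ y) := by
    have heq : (fun y : Eu N => P' y * φ y)
        = fun y => P' y * (φ y - φ x) + P' y * φ x := by funext y; ring
    rw [heq]; exact hIab.add hIb
  have hmassR : ∫ y, P' y = 1 := by
    rw [hP', integral_sub_left_eq_self (poisson N s z) volume x, poisson_integral hs0 hz]
  have hrepr : csExt N s φ x z - φ x = ∫ y, P' y * (φ y - φ x) := by
    have h1 : ∫ y, P' y * (φ y - φ x) = (∫ y, P' y * φ y) - ∫ y, P' y * φ x := by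
      rw [← integral_sub hIfull hIb]
      congr 1; funext y; ring
    rw [h1, integral_mul_const, hmassR, one_mul]
    rfl
  have habs : |∫ y, P' y * (φ y - φ x)| ≤ ∫ y, |P' y * (φ y - φ x)| := by
    simpa only [Real.norm_eq_abs] using
      norm_integral_le_integral_norm (μ := (volume : Measure (Eu N)))
        (fun y => P' y * (φ y - φ x))
  calc ENNReal.ofReal ((csExt N s φ x z - φ x) ^ 2)
      ≤ ENNReal.ofReal ((∫ y, |P' y * (φ y - φ x)|) ^ 2) := by
        apply ENNReal.ofReal_le_ofReal
        rw [hrepr, ← sq_abs]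
        exact pow_le_pow_left₀ (abs_nonneg _) habs 2
    _ = (∫⁻ y, ENNReal.ofReal (P' y) * ENNReal.ofReal |φ y - φ x|) ^ 2 := by
        rw [ENNReal.ofReal_pow (integral_nonneg fun y => abs_nonneg _)]
        congr 1
        rw [ofReal_integral_eq_lintegral_ofReal hIab.abs
          (Eventually.of_forall fun y => abs_nonneg _)]
        apply lintegral_congr
        intro y
        rw [abs_mul, abs_of_nonneg (hP'nn y), ENNReal.ofReal_mul (hP'nn y)]
    _ ≤ (G ^ (1/2 : ℝ)) ^ 2 := pow_le_pow_left₀ zero_le hCS 2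
    _ = G := by
        rw [← ENNReal.rpow_natCast (G ^ (1/2:ℝ)) 2, ← ENNReal.rpow_mul]
        norm_num

end AuxPoisson

/-- Estimate (2.6) of Proposition 2.5: for `φ ∈ L²(ℝ^N)` with finite Gagliardo seminorm,
`‖P_z ∗ φ - φ‖²_{L²} ≤ β_{N,s} [φ]²_{W^{s,2}} z^{2s}` for every `z > 0`. -/
theorem L2_distance_to_poisson_extension
    (N : ℕ) (hN : 2 ≤ N) (s : ℝ) (hs0 : 0 < s) (hs1 : s < 1)
    (φ : Eu N → ℝ) (hφ : MemLp φ 2 volume) (hfin : gagliardoSq N s φ ≠ ⊤)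
    (z : ℝ) (hz : 0 < z) :
    (∫⁻ x, ENNReal.ofReal ((csExt N s φ x z - φ x) ^ 2))
      ≤ ENNReal.ofReal (betaC N s) * gagliardoSq N s φ * ENNReal.ofReal (z ^ (2 * s)) := by
  have hφm : AEMeasurable φ (volume : Measure (Eu N)) := hφ.aestronglyMeasurable.aemeasurable
  have hb := betaC_pos (N := N) hs0
  have key : ∀ x : Eu N,
      (∫⁻ y, ENNReal.ofReal (poisson N s z (x - y)) * ENNReal.ofReal ((φ y - φ x) ^ 2))
      ≤ ENNReal.ofReal (betaC N s * z ^ (2 * s))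
        * ∫⁻ y, ENNReal.ofReal (|φ x - φ y| ^ 2 / ‖x - y‖ ^ ((N:ℝ) + 2 * s)) := by
    intro x
    rw [← lintegral_const_mul' _ _ ENNReal.ofReal_ne_top]
    apply lintegral_mono
    intro y
    by_cases hxy : x = y
    · subst hxy
      simp
    · have hw : x - y ≠ 0 := sub_ne_zero.2 hxy
      have hble := poisson_le hs0 hz hw
      calc ENNReal.ofReal (poisson N s z (x - y)) * ENNReal.ofReal ((φ y - φ x) ^ 2)
          ≤ ENNReal.ofReal (betaC N s * z ^ (2 * s) * (‖x - y‖ ^ ((N:ℝ) + 2 * s))⁻¹)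
            * ENNReal.ofReal ((φ y - φ x) ^ 2) :=
            mul_le_mul_left (ENNReal.ofReal_le_ofReal hble) _
        _ = ENNReal.ofReal (betaC N s * z ^ (2 * s))
            * ENNReal.ofReal (|φ x - φ y| ^ 2 / ‖x - y‖ ^ ((N:ℝ) + 2 * s)) := by
            rw [ENNReal.ofReal_mul (by positivity), mul_assoc,
              ← ENNReal.ofReal_mul (by positivity)]
            congr 2
            rw [sq_abs, div_eq_inv_mul]
            ring
  have main : ∀ x : Eu N, ENNReal.ofReal ((csExt N s φ x z - φ x) ^ 2)
      ≤ ENNReal.ofReal (betaC N s * z ^ (2 * s))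
        * ∫⁻ y, ENNReal.ofReal (|φ x - φ y| ^ 2 / ‖x - y‖ ^ ((N:ℝ) + 2 * s)) :=
    fun x => (stepA hs0 hz φ hφm x).trans (key x)
  calc (∫⁻ x, ENNReal.ofReal ((csExt N s φ x z - φ x) ^ 2))
      ≤ ∫⁻ x, ENNReal.ofReal (betaC N s * z ^ (2 * s))
        * ∫⁻ y, ENNReal.ofReal (|φ x - φ y| ^ 2 / ‖x - y‖ ^ ((N:ℝ) + 2 * s)) :=
        lintegral_mono main
    _ = ENNReal.ofReal (betaC N s * z ^ (2 * s)) * gagliardoSq N s φ :=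
        lintegral_const_mul' _ _ ENNReal.ofReal_ne_top
    _ = ENNReal.ofReal (betaC N s) * gagliardoSq N s φ * ENNReal.ofReal (z ^ (2 * s)) := by
        rw [ENNReal.ofReal_mul hb.le]
        ring
end
end

section
/- (Transfer of asymmetry.) Let N ≥ 1 and let Ω, E ⊆ ℝ^N be measurable sets of finite Lebesgue measure with |Ω| > 0. Suppose that |Ω Δ E|/|Ω| ≤ γ A(Ω) for some 0 < γ < 1/2. Then |E| > 0 and A(E) ≥ ((1 − 2γ)/c_γ) A(Ω), where c_γ = 1 if |E∖Ω| = 0 and c_γ = 1 + 2γ if |E∖Ω| > 0. -/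
open MeasureTheory Filter
open scoped ENNReal NNReal Topology FourierTransform RealInnerProductSpace

noncomputable section

/-- In `ℝ^N` with `N ≥ 1`, every finite positive volume is attained by some ball. -/
lemma exists_ball_vol (N : ℕ) (hN : 1 ≤ N) (v : ℝ≥0∞) (hv0 : v ≠ 0) (hvt : v ≠ ⊤)
    (x₀ : Eu N) : ∃ r : ℝ, 0 < r ∧ volume (Metric.ball x₀ r) = v := by
  haveI : Nontrivial (Eu N) := by
    apply Module.nontrivial_of_finrank_pos (R := ℝ)
    rw [finrank_euclideanSpace_fin]; omega
  have hc0 : volume (Metric.ball (0 : Eu N) 1) ≠ 0 :=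
    (Metric.measure_ball_pos _ _ one_pos).ne'
  have hct : volume (Metric.ball (0 : Eu N) 1) ≠ ⊤ := measure_ball_lt_top.ne
  set c := volume (Metric.ball (0 : Eu N) 1) with hc
  have hdiv0 : v / c ≠ 0 := by simp [ENNReal.div_eq_zero_iff, hv0, hct]
  have hdivt : v / c ≠ ⊤ := by simp [ENNReal.div_eq_top, hv0, hvt, hc0]
  set t := (v / c).toReal with ht
  have ht0 : 0 < t := ENNReal.toReal_pos hdiv0 hdivt
  have hr0 : 0 < t ^ ((N : ℝ))⁻¹ := Real.rpow_pos_of_pos ht0 _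
  refine ⟨t ^ ((N : ℝ))⁻¹, hr0, ?_⟩
  rw [Measure.addHaar_ball _ _ hr0.le, finrank_euclideanSpace_fin]
  have hNne : (N : ℝ) ≠ 0 := Nat.cast_ne_zero.mpr (by omega)
  have hpow : (t ^ ((N : ℝ))⁻¹) ^ N = t := by
    rw [← Real.rpow_natCast (t ^ ((N : ℝ))⁻¹) N, ← Real.rpow_mul ht0.le,
      inv_mul_cancel₀ hNne, Real.rpow_one]
  rw [hpow, ENNReal.ofReal_toReal hdivt, ENNReal.div_mul_cancel hc0 hct]

/-- **Transfer of asymmetry** (Lemma 4.1): if `|Ω Δ E|/|Ω| ≤ γ A(Ω)` with `0 < γ < 1/2`,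
then `|E| > 0` and `A(E) ≥ ((1-2γ)/c_γ) A(Ω)`, where `c_γ = 1` if `|E∖Ω| = 0` and
`c_γ = 1 + 2γ` otherwise. -/
theorem transfer_of_asymmetry
    (N : ℕ) (hN : 1 ≤ N) (Ω E : Set (Eu N))
    (hΩm : MeasurableSet Ω) (hEm : MeasurableSet E)
    (hΩfin : volume Ω ≠ ⊤) (hEfin : volume E ≠ ⊤) (hΩpos : 0 < volume Ω)
    (γ : ℝ) (hγ0 : 0 < γ) (hγ : γ < 1 / 2)
    (h : (volume (symmDiff Ω E)).toReal / (volume Ω).toReal ≤ γ * asym N Ω) :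
    0 < volume E ∧
      asym N E ≥
        (1 - 2 * γ) / (if volume (E \ Ω) = 0 then 1 else 1 + 2 * γ) * asym N Ω := by
  classical
  -- abbreviations
  set A := asym N Ω with hA
  have hm : 0 < (volume Ω).toReal := ENNReal.toReal_pos hΩpos.ne' hΩfin
  set m := (volume Ω).toReal with hmdef
  -- basic facts about the symmetric difference
  have hsdfin : volume (symmDiff Ω E) ≠ ⊤ := by
    refine ne_top_of_le_ne_top ?_ ((measure_mono Set.symmDiff_subset_union).trans
      (measure_union_le _ _))
    exact ENNReal.add_ne_top.mpr ⟨hΩfin, hEfin⟩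
  set d := (volume (symmDiff Ω E)).toReal with hddef
  have hd0 : 0 ≤ d := ENNReal.toReal_nonneg
  -- A(Ω) is nonnegative
  have hbddΩ : BddBelow { c : ℝ | ∃ (x₀ : Eu N) (r : ℝ), 0 < r ∧
      volume (Metric.ball x₀ r) = volume Ω ∧
      c = (volume (symmDiff Ω (Metric.ball x₀ r))).toReal / (volume Ω).toReal } := by
    refine ⟨0, fun c hc => ?_⟩
    obtain ⟨x₀, r, hr, hv, rfl⟩ := hc
    exact div_nonneg ENNReal.toReal_nonneg ENNReal.toReal_nonneg
  have hA0 : 0 ≤ A := by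
    apply Real.sInf_nonneg
    rintro c ⟨x₀, r, hr, hv, rfl⟩
    exact div_nonneg ENNReal.toReal_nonneg ENNReal.toReal_nonneg
  -- A(Ω) ≤ 2
  have hA2 : A ≤ 2 := by
    obtain ⟨r₀, hr₀, hv₀⟩ := exists_ball_vol N hN (volume Ω) hΩpos.ne' hΩfin 0
    have hmem : (volume (symmDiff Ω (Metric.ball (0 : Eu N) r₀))).toReal / (volume Ω).toReal ∈
        { c : ℝ | ∃ (x₀ : Eu N) (r : ℝ), 0 < r ∧
          volume (Metric.ball x₀ r) = volume Ω ∧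
          c = (volume (symmDiff Ω (Metric.ball x₀ r))).toReal / (volume Ω).toReal } :=
      ⟨0, r₀, hr₀, hv₀, rfl⟩
    have hle : volume (symmDiff Ω (Metric.ball (0 : Eu N) r₀)) ≤ volume Ω + volume Ω := by
      refine (measure_mono Set.symmDiff_subset_union).trans
        ((measure_union_le _ _).trans ?_)
      rw [hv₀]
    have h2 : (volume (symmDiff Ω (Metric.ball (0 : Eu N) r₀))).toReal / (volume Ω).toReal ≤ 2 := by
      rw [div_le_iff₀ hm]
      calc (volume (symmDiff Ω (Metric.ball (0 : Eu N) r₀))).toReal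
          ≤ (volume Ω + volume Ω).toReal :=
            ENNReal.toReal_mono (ENNReal.add_ne_top.mpr ⟨hΩfin, hΩfin⟩) hle
        _ = 2 * (volume Ω).toReal := by
            rw [ENNReal.toReal_add hΩfin hΩfin]; ring
    exact (csInf_le hbddΩ hmem).trans h2
  have hdγ : d ≤ γ * A * m := by
    have := (div_le_iff₀ hm).mp h
    linarith
  -- |E| > 0
  have hEpos : 0 < volume E := by
    by_contra hE0
    push_neg at hE0
    have hE0' : volume E = 0 := le_antisymm hE0 zero_le
    have hsub : Ω ⊆ symmDiff Ω E ∪ E := by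
      intro x hx
      by_cases hxE : x ∈ E
      · exact Or.inr hxE
      · exact Or.inl (Or.inl ⟨hx, hxE⟩)
    have : volume Ω ≤ volume (symmDiff Ω E) := by
      calc volume Ω ≤ volume (symmDiff Ω E ∪ E) := measure_mono hsub
        _ ≤ volume (symmDiff Ω E) + volume E := measure_union_le _ _
        _ = volume (symmDiff Ω E) := by rw [hE0', add_zero]
    have hmd : m ≤ d := ENNReal.toReal_mono hsdfin this
    have h1 : γ * A * m ≤ γ * 2 * m := by
      nlinarith [mul_nonneg (mul_nonneg hγ0.le (sub_nonneg.mpr hA2)) hm.le]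
    nlinarith
  have he : 0 < (volume E).toReal := ENNReal.toReal_pos hEpos.ne' hEfin
  set e := (volume E).toReal with hedef
  refine ⟨hEpos, ?_⟩
  -- the constant c_γ
  set cγ : ℝ := if volume (E \ Ω) = 0 then 1 else 1 + 2 * γ with hcγdef
  have hcγ1 : 1 ≤ cγ := by
    rw [hcγdef]; split <;> nlinarith
  have hcγ0 : 0 < cγ := lt_of_lt_of_le one_pos hcγ1
  -- e ≤ cγ * m
  have hecm : e ≤ cγ * m := by
    rw [hcγdef]
    split
    · next h0 =>
      have : volume E ≤ volume Ω := by
        have hsub : E ⊆ Ω ∪ E \ Ω := by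
          intro x hx
          by_cases hxΩ : x ∈ Ω
          · exact Or.inl hxΩ
          · exact Or.inr ⟨hx, hxΩ⟩
        calc volume E ≤ volume (Ω ∪ E \ Ω) := measure_mono hsub
          _ ≤ volume Ω + volume (E \ Ω) := measure_union_le _ _
          _ = volume Ω := by rw [h0, add_zero]
      have := ENNReal.toReal_mono hΩfin this
      rw [one_mul]
      exact this
    · next h0 =>
      have hsub : E ⊆ Ω ∪ symmDiff Ω E := by
        intro x hx
        by_cases hxΩ : x ∈ Ω
        · exact Or.inl hxΩ
        · exact Or.inr (Or.inr ⟨hx, hxΩ⟩)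
      have : volume E ≤ volume Ω + volume (symmDiff Ω E) :=
        (measure_mono hsub).trans (measure_union_le _ _)
      have hem : e ≤ m + d := by
        have := ENNReal.toReal_mono (ENNReal.add_ne_top.mpr ⟨hΩfin, hsdfin⟩) this
        rwa [ENNReal.toReal_add hΩfin hsdfin] at this
      nlinarith [mul_nonneg (mul_nonneg hγ0.le (sub_nonneg.mpr hA2)) hm.le]
  -- main bound for every competitor ball of E
  have hγ' : 0 ≤ 1 - 2 * γ := by linarith
  apply le_csInf
  · obtain ⟨r₁, hr₁, hv₁⟩ := exists_ball_vol N hN (volume E) hEpos.ne' hEfin 0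
    exact ⟨_, 0, r₁, hr₁, hv₁, rfl⟩
  rintro c ⟨x₀, r, hr, hvB, rfl⟩
  set B := Metric.ball x₀ r with hBdef
  have hBfin : volume B ≠ ⊤ := by rw [hvB]; exact hEfin
  obtain ⟨r', hr', hvB'⟩ := exists_ball_vol N hN (volume Ω) hΩpos.ne' hΩfin x₀
  set B' := Metric.ball x₀ r' with hB'def
  have hB'fin : volume B' ≠ ⊤ := by rw [hvB']; exact hΩfin
  -- |E Δ B| is finite
  have hEBfin : volume (symmDiff E B) ≠ ⊤ := by
    refine ne_top_of_le_ne_top ?_ ((measure_mono Set.symmDiff_subset_union).trans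
      (measure_union_le _ _))
    exact ENNReal.add_ne_top.mpr ⟨hEfin, hBfin⟩
  set k := (volume (symmDiff E B)).toReal with hkdef
  -- |B Δ B'| ≤ |Ω Δ E|
  have hBB' : volume (symmDiff B B') ≤ volume (symmDiff Ω E) := by
    rcases le_total r r' with hrr | hrr
    · have hsub : B ⊆ B' := Metric.ball_subset_ball hrr
      rw [symmDiff_of_le hsub,
        measure_diff hsub measurableSet_ball.nullMeasurableSet hBfin, hvB, hvB']
      rw [tsub_le_iff_right]
      have hsub2 : Ω ⊆ symmDiff Ω E ∪ E := by
        intro x hx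
        by_cases hxE : x ∈ E
        · exact Or.inr hxE
        · exact Or.inl (Or.inl ⟨hx, hxE⟩)
      exact (measure_mono hsub2).trans (measure_union_le _ _)
    · have hsub : B' ⊆ B := Metric.ball_subset_ball hrr
      rw [symmDiff_comm, symmDiff_of_le hsub,
        measure_diff hsub measurableSet_ball.nullMeasurableSet hB'fin, hvB, hvB']
      rw [tsub_le_iff_right]
      have hsub2 : E ⊆ symmDiff Ω E ∪ Ω := by
        intro x hx
        by_cases hxΩ : x ∈ Ω
        · exact Or.inr hxΩ
        · exact Or.inl (Or.inr ⟨hx, hxΩ⟩)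
      exact (measure_mono hsub2).trans (measure_union_le _ _)
  -- triangle inequality chain
  have htri : volume (symmDiff Ω B') ≤
      volume (symmDiff Ω E) + (volume (symmDiff E B) + volume (symmDiff Ω E)) := by
    calc volume (symmDiff Ω B')
        ≤ volume (symmDiff Ω E ∪ symmDiff E B') :=
          measure_mono (symmDiff_triangle Ω E B')
      _ ≤ volume (symmDiff Ω E) + volume (symmDiff E B') := measure_union_le _ _
      _ ≤ volume (symmDiff Ω E) + (volume (symmDiff E B) + volume (symmDiff B B')) := by
          gcongr
          calc volume (symmDiff E B')
              ≤ volume (symmDiff E B ∪ symmDiff B B') :=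
                measure_mono (symmDiff_triangle E B B')
            _ ≤ volume (symmDiff E B) + volume (symmDiff B B') := measure_union_le _ _
      _ ≤ volume (symmDiff Ω E) + (volume (symmDiff E B) + volume (symmDiff Ω E)) := by
          gcongr
  have hsumfin : volume (symmDiff Ω E) + (volume (symmDiff E B) + volume (symmDiff Ω E)) ≠ ⊤ :=
    ENNReal.add_ne_top.mpr ⟨hsdfin, ENNReal.add_ne_top.mpr ⟨hEBfin, hsdfin⟩⟩
  have htriR : (volume (symmDiff Ω B')).toReal ≤ d + (k + d) := by
    have := ENNReal.toReal_mono hsumfin htri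
    rwa [ENNReal.toReal_add hsdfin (ENNReal.add_ne_top.mpr ⟨hEBfin, hsdfin⟩),
      ENNReal.toReal_add hEBfin hsdfin] at this
  -- A(Ω) ≤ |Ω Δ B'|/|Ω|
  have hAle : A ≤ (volume (symmDiff Ω B')).toReal / m :=
    csInf_le hbddΩ ⟨x₀, r', hr', hvB', rfl⟩
  have hAm : A * m ≤ 2 * d + k := by
    have := (le_div_iff₀ hm).mp hAle
    linarith
  have hk : (1 - 2 * γ) * A * m ≤ k := by nlinarith
  -- conclude
  rw [div_mul_eq_mul_div, div_le_div_iff₀ hcγ0 he]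
  nlinarith [mul_nonneg (mul_nonneg hγ' hA0) (sub_nonneg.mpr hecm), mul_nonneg (sub_nonneg.mpr hk) hcγ0.le]
end
end

section
/- Let N ≥ 1 and 0 < s < 1. Let φ : ℝ^N → ℝ be measurable with finite s-Hölder seminorm [φ]_{0,s} := sup_{x ∈ ℝ^N} sup_{h ≠ 0} |φ(x+h) − φ(x)|/|h|^s < ∞. Then for every z > 0 and every x ∈ ℝ^N, the convolution (P_z ∗ φ)(x) is well defined and |(P_z ∗ φ)(x) − φ(x)| ≤ C [φ]_{0,s} z^s, where C = ∫_{ℝ^N} P₁(w) |w|^s dw < ∞. -/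
open MeasureTheory Filter
open scoped ENNReal NNReal Topology FourierTransform RealInnerProductSpace

noncomputable section

lemma eu_aux_integrable {N : ℕ} {s t : ℝ} (hs : 0 < s) (ht0 : 0 ≤ t) (hts : t < 2 * s) :
    Integrable (fun w : Eu N => ((1:ℝ) + ‖w‖ ^ 2) ^ (-((N : ℝ) + 2 * s) / 2) * ‖w‖ ^ t)
      volume := by
  set r : ℝ := (N : ℝ) + 2 * s with hrdef
  have hr0 : (0:ℝ) < r := by positivity
  have hnr : (Module.finrank ℝ (Eu N) : ℝ) < r - t := by
    rw [finrank_euclideanSpace_fin]; simp only [hrdef]; linarith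
  refine ((integrable_one_add_norm (μ := volume) hnr).const_mul
    ((2:ℝ) ^ (r / 2))).mono' ?_ (Filter.Eventually.of_forall fun w => ?_)
  · apply Measurable.aestronglyMeasurable
    fun_prop
  · have h1 : (0:ℝ) < 1 + ‖w‖ := by positivity
    have hb : ((1:ℝ) + ‖w‖ ^ 2) ^ (-r / 2) ≤ (2:ℝ) ^ (r/2) * (1 + ‖w‖) ^ (-r) :=
      rpow_neg_one_add_norm_sq_le w hr0
    have ht : ‖w‖ ^ t ≤ (1 + ‖w‖) ^ t :=
      Real.rpow_le_rpow (norm_nonneg w) (by linarith [norm_nonneg w]) ht0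
    rw [Real.norm_eq_abs, abs_of_nonneg (by positivity)]
    calc ((1:ℝ) + ‖w‖ ^ 2) ^ (-r / 2) * ‖w‖ ^ t
        ≤ ((2:ℝ) ^ (r/2) * (1 + ‖w‖) ^ (-r)) * (1 + ‖w‖) ^ t := by
          apply mul_le_mul hb ht (by positivity) (by positivity)
      _ = (2:ℝ) ^ (r/2) * (1 + ‖w‖) ^ (-(r - t)) := by
          rw [mul_assoc, ← Real.rpow_add h1, show -r + t = -(r - t) by ring]

lemma eu_int_pos {N : ℕ} {s : ℝ} (hs : 0 < s) :
    0 < ∫ x : Eu N, ((1 : ℝ) + ‖x‖ ^ 2) ^ (-((N : ℝ) + 2 * s) / 2) := by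
  have hint : Integrable (fun w : Eu N => ((1:ℝ) + ‖w‖ ^ 2) ^ (-((N : ℝ) + 2 * s) / 2))
      volume := by
    have := eu_aux_integrable (N := N) hs le_rfl (by linarith)
    simpa [Real.rpow_zero] using this
  rw [integral_pos_iff_support_of_nonneg (fun x => by positivity) hint]
  have : Function.support (fun w : Eu N => ((1:ℝ) + ‖w‖ ^ 2) ^ (-((N : ℝ) + 2 * s) / 2))
      = Set.univ := by
    ext w; simp only [Function.mem_support, Set.mem_univ, iff_true]
    positivity
  rw [this]
  simpa using (isOpen_univ.measure_pos (volume : Measure (Eu N)) Set.univ_nonempty)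

lemma poisson_smul {N : ℕ} {s z : ℝ} (hz : 0 < z) (w : Eu N) :
    poisson N s z (z • w) = z ^ (-(N:ℝ)) * poisson N s 1 w := by
  unfold poisson
  have h1 : ‖z • w‖ ^ 2 = z ^ 2 * ‖w‖ ^ 2 := by
    rw [norm_smul, Real.norm_eq_abs, mul_pow, sq_abs]
  rw [h1, show z ^ 2 + z ^ 2 * ‖w‖ ^ 2 = z ^ 2 * (1 + ‖w‖ ^ 2) by ring,
    Real.mul_rpow (by positivity) (by positivity)]
  have h3 : ((z : ℝ) ^ 2) ^ (-((N:ℝ) + 2*s)/2) = z ^ (-((N:ℝ) + 2*s)) := by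
    rw [← Real.rpow_natCast z 2, ← Real.rpow_mul hz.le]
    congr 1; push_cast; ring
  have key : z ^ (2*s) * z ^ (-((N:ℝ)+2*s)) = z ^ (-(N:ℝ)) := by
    rw [← Real.rpow_add hz]; ring_nf
  rw [h3, one_pow, Real.one_rpow, ← key]; ring

lemma poisson_meas {N : ℕ} (s z : ℝ) : Measurable (poisson N s z) := by
  unfold poisson; fun_prop

lemma poisson_scale_integral {N : ℕ} {s z : ℝ} (hz : 0 < z) (g : Eu N → ℝ) :
    (∫ y, poisson N s z y * g y) = ∫ w, poisson N s 1 w * g (z • w) := by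
  have hcomp : (fun w : Eu N => poisson N s z (z • w) * g (z • w))
      = fun w => z ^ (-(N:ℝ)) * (poisson N s 1 w * g (z • w)) := by
    funext w; rw [poisson_smul hz]; ring
  have hzi : ((z : ℝ) ^ Module.finrank ℝ (Eu N))⁻¹ = z ^ (-(N:ℝ)) := by
    rw [finrank_euclideanSpace_fin, Real.rpow_neg hz.le, Real.rpow_natCast]
  have h := Measure.integral_comp_smul_of_nonneg (μ := (volume : Measure (Eu N)))
    (fun y => poisson N s z y * g y) z (hR := hz.le)
  simp only [hcomp, hzi, smul_eq_mul] at h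
  rw [integral_const_mul] at h
  exact (mul_left_cancel₀ (ne_of_gt (Real.rpow_pos_of_pos hz _)) h).symm

lemma poisson_scale_integrable {N : ℕ} {s z : ℝ} (hz : 0 < z) (g : Eu N → ℝ) :
    Integrable (fun y => poisson N s z y * g y) volume ↔
      Integrable (fun w => poisson N s 1 w * g (z • w)) volume := by
  have hcomp : (fun w : Eu N => poisson N s z (z • w) * g (z • w))
      = fun w => z ^ (-(N:ℝ)) * (poisson N s 1 w * g (z • w)) := by
    funext w; rw [poisson_smul hz]; ring
  have h := integrable_comp_smul_iff (volume : Measure (Eu N))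
    (fun y => poisson N s z y * g y) hz.ne'
  rw [hcomp] at h
  rw [← h, integrable_const_mul_iff]
  exact isUnit_iff_ne_zero.2 (ne_of_gt (Real.rpow_pos_of_pos hz _))

/-- **Lemma 6.1**: if `φ` has finite `s`-Hölder seminorm, bounded by `K ≥ 0`
(i.e. `|φ(x+h)-φ(x)| ≤ K|h|^s` for all `x, h`), then for every `z > 0` and `x` the
convolution `(P_z ∗ φ)(x)` is well defined and
`|(P_z ∗ φ)(x) - φ(x)| ≤ C K z^s` with `C = ∫ P₁(w)|w|^s dw < ∞`. -/
theorem poisson_extension_holder_bound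
    (N : ℕ) (hN : 1 ≤ N) (s : ℝ) (hs0 : 0 < s) (hs1 : s < 1)
    (φ : Eu N → ℝ) (hφm : Measurable φ)
    (K : ℝ) (hK0 : 0 ≤ K)
    (hK : ∀ x h : Eu N, |φ (x + h) - φ x| ≤ K * ‖h‖ ^ s) :
    Integrable (fun w : Eu N => poisson N s 1 w * ‖w‖ ^ s) volume ∧
      ∀ z : ℝ, 0 < z → ∀ x : Eu N,
        Integrable (fun y : Eu N => poisson N s z y * φ (x - y)) volume ∧
        |(∫ y, poisson N s z y * φ (x - y)) - φ x|
          ≤ (∫ w : Eu N, poisson N s 1 w * ‖w‖ ^ s) * K * z ^ s := by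
  have hIpos := eu_int_pos (N := N) hs0
  have hβ : 0 < betaC N s := inv_pos.2 hIpos
  set C : ℝ := ∫ w : Eu N, poisson N s 1 w * ‖w‖ ^ s with hCdef
  have hC1 : (fun w : Eu N => poisson N s 1 w * ‖w‖ ^ s)
      = fun w => betaC N s * (((1:ℝ) + ‖w‖ ^ 2) ^ (-((N : ℝ) + 2 * s) / 2) * ‖w‖ ^ s) := by
    funext w; simp only [poisson, Real.one_rpow, one_pow, mul_one]; ring
  have hCint : Integrable (fun w : Eu N => poisson N s 1 w * ‖w‖ ^ s) volume := by
    rw [hC1]; exact (eu_aux_integrable hs0 hs0.le (by linarith)).const_mul _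
  refine ⟨hCint, fun z hz x => ?_⟩
  -- integrability of P₁ and Pz
  have hP1eq : (fun w : Eu N => poisson N s 1 w)
      = fun w => betaC N s * (((1:ℝ) + ‖w‖ ^ 2) ^ (-((N : ℝ) + 2 * s) / 2)) := by
    funext w; simp only [poisson, Real.one_rpow, one_pow, mul_one]
  have hP1int : Integrable (fun w : Eu N => poisson N s 1 w) volume := by
    rw [hP1eq]
    have := (eu_aux_integrable (N := N) hs0 le_rfl (by linarith)).const_mul (betaC N s)
    simpa [Real.rpow_zero] using this
  have hPzint : Integrable (fun y : Eu N => poisson N s z y) volume := by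
    have h := (poisson_scale_integrable hz (fun _ => (1:ℝ))).2 (by simpa using hP1int)
    simpa using h
  -- normalization ∫ Pz = 1
  have hP1norm : ∫ w : Eu N, poisson N s 1 w = 1 := by
    rw [hP1eq, integral_const_mul, betaC, inv_mul_cancel₀ hIpos.ne']
  have hPznorm : ∫ y : Eu N, poisson N s z y = 1 := by
    have h := poisson_scale_integral (N := N) (s := s) hz (fun _ => (1:ℝ))
    simpa [hP1norm] using h
  -- scaled moment
  have hsc : ∀ w : Eu N, ‖z • w‖ ^ s = z ^ s * ‖w‖ ^ s := by
    intro w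
    rw [norm_smul, Real.norm_eq_abs, abs_of_pos hz, Real.mul_rpow hz.le (norm_nonneg w)]
  have hmom_eq : (fun w : Eu N => poisson N s 1 w * ‖z • w‖ ^ s)
      = fun w => z ^ s * (poisson N s 1 w * ‖w‖ ^ s) := by
    funext w; rw [hsc]; ring
  have hPzsint : Integrable (fun y : Eu N => poisson N s z y * ‖y‖ ^ s) volume := by
    rw [poisson_scale_integrable hz (fun y => ‖y‖ ^ s), hmom_eq]
    exact hCint.const_mul _
  have hmom : ∫ y : Eu N, poisson N s z y * ‖y‖ ^ s = z ^ s * C := by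
    rw [poisson_scale_integral hz (fun y => ‖y‖ ^ s), hmom_eq, integral_const_mul]
  -- pointwise facts
  have hPnn : ∀ y : Eu N, 0 ≤ poisson N s z y := fun y =>
    mul_nonneg (mul_nonneg hβ.le (Real.rpow_nonneg hz.le _))
      (Real.rpow_nonneg (by positivity) _)
  have hhol : ∀ y : Eu N, |φ (x - y) - φ x| ≤ K * ‖y‖ ^ s := by
    intro y
    have h := hK x (-y)
    rwa [← sub_eq_add_neg, norm_neg] at h
  have hφb : ∀ y : Eu N, |φ (x - y)| ≤ |φ x| + K * ‖y‖ ^ s := by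
    intro y
    have h2 : φ (x - y) = φ x + (φ (x - y) - φ x) := by ring
    calc |φ (x - y)| = |φ x + (φ (x - y) - φ x)| := by rw [← h2]
      _ ≤ |φ x| + |φ (x - y) - φ x| := abs_add_le _ _
      _ ≤ |φ x| + K * ‖y‖ ^ s := by linarith [hhol y]
  have hFm : AEStronglyMeasurable (fun y : Eu N => poisson N s z y * φ (x - y)) volume :=
    ((poisson_meas s z).mul (hφm.comp (measurable_const.sub measurable_id))).aestronglyMeasurable
  have hBint : Integrable
      (fun y : Eu N => |φ x| * poisson N s z y + K * (poisson N s z y * ‖y‖ ^ s)) volume :=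
    (hPzint.const_mul _).add (hPzsint.const_mul _)
  have hFint : Integrable (fun y : Eu N => poisson N s z y * φ (x - y)) volume := by
    refine hBint.mono' hFm (Filter.Eventually.of_forall fun y => ?_)
    rw [Real.norm_eq_abs, abs_mul, abs_of_nonneg (hPnn y)]
    calc poisson N s z y * |φ (x - y)|
        ≤ poisson N s z y * (|φ x| + K * ‖y‖ ^ s) :=
          mul_le_mul_of_nonneg_left (hφb y) (hPnn y)
      _ = |φ x| * poisson N s z y + K * (poisson N s z y * ‖y‖ ^ s) := by ring
  refine ⟨hFint, ?_⟩
  -- the estimate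
  have hGint : Integrable (fun y : Eu N => poisson N s z y * φ x) volume :=
    hPzint.mul_const _
  have hGval : ∫ y : Eu N, poisson N s z y * φ x = φ x := by
    rw [integral_mul_const, hPznorm, one_mul]
  have hHint : Integrable (fun y : Eu N => poisson N s z y * (φ (x - y) - φ x)) volume := by
    have := hFint.sub hGint
    simpa [mul_sub, Pi.sub_def] using this
  have hsplit : (∫ y, poisson N s z y * φ (x - y)) - φ x
      = ∫ y, poisson N s z y * (φ (x - y) - φ x) := by
    rw [show (fun y : Eu N => poisson N s z y * (φ (x - y) - φ x))
        = fun y => poisson N s z y * φ (x - y) - poisson N s z y * φ x from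
        funext fun y => mul_sub _ _ _,
      integral_sub hFint hGint, hGval]
  rw [hsplit]
  calc |∫ y, poisson N s z y * (φ (x - y) - φ x)|
      ≤ ∫ y, ‖poisson N s z y * (φ (x - y) - φ x)‖ := by
        simpa [Real.norm_eq_abs] using
          norm_integral_le_integral_norm (fun y : Eu N => poisson N s z y * (φ (x - y) - φ x))
    _ ≤ ∫ y : Eu N, K * (poisson N s z y * ‖y‖ ^ s) := by
        refine integral_mono hHint.norm (hPzsint.const_mul _) fun y => ?_
        rw [Real.norm_eq_abs, abs_mul, abs_of_nonneg (hPnn y)]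
        calc poisson N s z y * |φ (x - y) - φ x|
            ≤ poisson N s z y * (K * ‖y‖ ^ s) :=
              mul_le_mul_of_nonneg_left (hhol y) (hPnn y)
          _ = K * (poisson N s z y * ‖y‖ ^ s) := by ring
    _ = C * K * z ^ s := by rw [integral_const_mul, hmom]; ring
end
end
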